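/- arXiv:1804.10449 — 2 statements merged into one kernel-verified Lean document; each statement's English description precedes it below -/
import Mathlib

section
/- Let α, β, γ, δ ∈ (0, π) with α ≠ β and γ ≠ δ, and let p(γ), p(δ) be the γ- and δ-projections of ⟦0,1⟧_{α,β} (so p(γ) ≠ p(δ)). Then for all r, s ∈ ℝ: ⟦r,s⟧_{γ,δ} = ⟦(s·p(γ) − r·p(δ))/(p(γ) − p(δ)), (r − s + s·p(γ) − r·p(δ))/(p(γ) − p(δ))⟧_{α,β}. -/
open Real Complex Set

/-- The `θ`-projection of `z`: the unique real `x` with `z ∈ x + ℝ·exp(iθ)`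
(for `θ ∈ (0,π)`); explicitly `x = Re z − Im z · cos θ / sin θ`. -/
noncomputable def proj (θ : ℝ) (z : ℂ) : ℝ := z.re - z.im * Real.cos θ / Real.sin θ

/-- `inter α β r s` is the (unique, for distinct `α β ∈ (0,π)`) complex number
with `α`-projection `r` and `β`-projection `s`, i.e. `⟦r,s⟧_{α,β}`. -/
noncomputable def inter (α β r s : ℝ) : ℂ :=
  Classical.epsilon fun z : ℂ => proj α z = r ∧ proj β z = s

/-- The line through `z` with slope (angle) `θ`. -/
def lineThru (z : ℂ) (θ : ℝ) : Set ℂ := {w | ∃ t : ℝ, w = z + t * Complex.exp (θ * Complex.I)}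

/-- The recursively defined stages of the origami set. -/
def origamiStep (U : Set ℝ) : ℕ → Set ℂ
  | 0 => {0, 1}
  | k + 1 => {w | ∃ z ∈ origamiStep U k, ∃ z' ∈ origamiStep U k,
      ∃ γ ∈ U, ∃ γ' ∈ U, γ ≠ γ' ∧ w ∈ lineThru z γ ∧ w ∈ lineThru z' γ'}

/-- The origami set `M(U)`. -/
def origami (U : Set ℝ) : Set ℂ := ⋃ k, origamiStep U k

/-- The real part `M_ℝ = M(U) ∩ ℝ`, viewed as a set of reals. -/
def origamiR (U : Set ℝ) : Set ℝ := {x : ℝ | (x : ℂ) ∈ origami U}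

/-!
Every projection `proj θ` is real-affine in `z`. Hence, with `B = ⟦0,1⟧_{α,β}`, the point
`a (1 - B) + b B` has `(α, β)`-coordinates `(a, b)` and `(γ, δ)`-coordinates
`(a (1 - p(γ)) + b p(γ), a (1 - p(δ)) + b p(δ))`; solving this linear system for `(a, b)` gives the
formula. It is solvable because `p(γ) - p(δ) = Im B · (cot δ - cot γ)` and `Im B ≠ 0`.
-/

lemma Real.cot_injOn : InjOn Real.cot (Ioo 0 π) := by
  intro α hα β hβ h
  have hsα := Real.sin_pos_of_pos_of_lt_pi hα.1 hα.2
  have hsβ := Real.sin_pos_of_pos_of_lt_pi hβ.1 hβ.2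
  rw [Real.cot_eq_cos_div_sin, Real.cot_eq_cos_div_sin, div_eq_div_iff hsα.ne' hsβ.ne'] at h
  have hsin : Real.sin (β - α) = 0 := by rw [Real.sin_sub]; linarith
  rw [Real.sin_eq_zero_iff_of_lt_of_lt (by linarith [hα.2, hβ.1]) (by linarith [hα.1, hβ.2])]
    at hsin
  linarith

lemma proj_eq_re_sub_im_mul_cot (θ : ℝ) (z : ℂ) : proj θ z = z.re - z.im * Real.cot θ := by
  rw [proj, Real.cot_eq_cos_div_sin, mul_div_assoc]

lemma proj_sub (θ : ℝ) (z w : ℂ) : proj θ (z - w) = proj θ z - proj θ w := by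
  simp only [proj_eq_re_sub_im_mul_cot, Complex.sub_re, Complex.sub_im]
  ring

lemma proj_ofReal_mul_one_sub_add_ofReal_mul (θ a b : ℝ) (z : ℂ) :
    proj θ (a * (1 - z) + b * z) = a * (1 - proj θ z) + b * proj θ z := by
  simp only [proj_eq_re_sub_im_mul_cot, Complex.add_re, Complex.add_im, Complex.mul_re,
    Complex.mul_im, Complex.sub_re, Complex.sub_im, Complex.one_re, Complex.one_im,
    Complex.ofReal_re, Complex.ofReal_im]
  ring

lemma proj_sub_proj (γ δ : ℝ) (z : ℂ) :
    proj γ z - proj δ z = z.im * (Real.cot δ - Real.cot γ) := by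
  simp only [proj_eq_re_sub_im_mul_cot]
  ring

section TwoAngles

variable {α β : ℝ} (hα : α ∈ Ioo 0 π) (hβ : β ∈ Ioo 0 π) (hαβ : α ≠ β)
include hα hβ hαβ

lemma cot_sub_cot_ne_zero : Real.cot β - Real.cot α ≠ 0 :=
  sub_ne_zero.mpr fun h => hαβ (Real.cot_injOn hα hβ h.symm)

lemma proj_ne_proj_iff {z : ℂ} : proj α z ≠ proj β z ↔ z.im ≠ 0 := by
  rw [← sub_ne_zero, proj_sub_proj, mul_ne_zero_iff, and_iff_left (cot_sub_cot_ne_zero hα hβ hαβ)]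

lemma eq_of_proj_eq_of_proj_eq {z w : ℂ} (h₁ : proj α z = proj α w) (h₂ : proj β z = proj β w) :
    z = w := by
  have h₁' : proj α (z - w) = 0 := by rw [proj_sub, h₁, sub_self]
  have h₂' : proj β (z - w) = 0 := by rw [proj_sub, h₂, sub_self]
  have him : (z - w).im = 0 := by
    by_contra h
    exact (proj_ne_proj_iff hα hβ hαβ).mpr h (h₁'.trans h₂'.symm)
  have hre : (z - w).re = 0 := by
    rw [proj_eq_re_sub_im_mul_cot, him, zero_mul, sub_zero] at h₁'
    exact h₁'
  exact sub_eq_zero.mp (Complex.ext hre him)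

lemma exists_proj_eq_and_proj_eq (r s : ℝ) : ∃ z : ℂ, proj α z = r ∧ proj β z = s := by
  set t := (r - s) / (Real.cot β - Real.cot α)
  refine ⟨⟨r + t * Real.cot α, t⟩, ?_, ?_⟩
  · simp only [proj_eq_re_sub_im_mul_cot]
    ring
  · have hct : t * (Real.cot β - Real.cot α) = r - s :=
      div_mul_cancel₀ _ (cot_sub_cot_ne_zero hα hβ hαβ)
    simp only [proj_eq_re_sub_im_mul_cot]
    linear_combination -hct

lemma proj_inter (r s : ℝ) : proj α (inter α β r s) = r ∧ proj β (inter α β r s) = s :=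
  Classical.epsilon_spec (exists_proj_eq_and_proj_eq hα hβ hαβ r s)

lemma eq_inter_iff {z : ℂ} {r s : ℝ} : z = inter α β r s ↔ proj α z = r ∧ proj β z = s := by
  obtain ⟨hr, hs⟩ := proj_inter hα hβ hαβ r s
  refine ⟨fun h => h ▸ ⟨hr, hs⟩, fun ⟨h₁, h₂⟩ => ?_⟩
  exact eq_of_proj_eq_of_proj_eq hα hβ hαβ (h₁.trans hr.symm) (h₂.trans hs.symm)

end TwoAngles

theorem coord_transform_backward (α β γ δ : ℝ)
    (hα : α ∈ Set.Ioo 0 Real.pi) (hβ : β ∈ Set.Ioo 0 Real.pi)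
    (hγ : γ ∈ Set.Ioo 0 Real.pi) (hδ : δ ∈ Set.Ioo 0 Real.pi)
    (hαβ : α ≠ β) (hγδ : γ ≠ δ) (r s : ℝ) :
    inter γ δ r s =
      inter α β
        ((s * proj γ (inter α β 0 1) - r * proj δ (inter α β 0 1)) /
          (proj γ (inter α β 0 1) - proj δ (inter α β 0 1)))
        ((r - s + s * proj γ (inter α β 0 1) - r * proj δ (inter α β 0 1)) /
          (proj γ (inter α β 0 1) - proj δ (inter α β 0 1))) := by
  set B := inter α β 0 1
  obtain ⟨hBα, hBβ⟩ := proj_inter hα hβ hαβ 0 1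
  have hne : proj γ B - proj δ B ≠ 0 := by
    have hBim : B.im ≠ 0 := (proj_ne_proj_iff hα hβ hαβ).mp (by rw [hBα, hBβ]; norm_num)
    exact sub_ne_zero.mpr ((proj_ne_proj_iff hγ hδ hγδ).mpr hBim)
  set a := (s * proj γ B - r * proj δ B) / (proj γ B - proj δ B)
  set b := (r - s + s * proj γ B - r * proj δ B) / (proj γ B - proj δ B)
  have hW : (a : ℂ) * (1 - B) + b * B = inter α β a b := by
    rw [eq_inter_iff hα hβ hαβ, proj_ofReal_mul_one_sub_add_ofReal_mul,
      proj_ofReal_mul_one_sub_add_ofReal_mul, hBα, hBβ]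
    constructor <;> ring
  rw [← hW, eq_comm, eq_inter_iff hγ hδ hγδ, proj_ofReal_mul_one_sub_add_ofReal_mul,
    proj_ofReal_mul_one_sub_add_ofReal_mul]
  constructor <;> (simp only [a, b]; field_simp; ring)
end

section
/- If U = {0, α, β} with distinct α, β ∈ (0, π), then the real part of the origami set satisfies M(U) ∩ ℝ = ℤ. -/
open Real Complex Set

/-!
Measure a point `z` by its two projections `proj α z` and `proj β z` along the directions `α`
and `β`. A line of slope `α` fixes `proj α`, one of slope `β` fixes `proj β`, and a horizontal
line fixes `proj α - proj β`. Any two of these three quantities determine the other, so for an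
additive group `G ∋ 1` the points with both projections in `G` are closed under the origami
construction. Conversely every point with integral projections is reached from `0` and `1` by
climbing the diagonal `⟦n, n⟧` (a real number `x` is `⟦x, x⟧`). Hence `M(U)` is exactly the
lattice of points with integral projections, and its real points are the integers.
-/

lemma proj_ofReal (θ x : ℝ) : proj θ x = x := by
  simp [proj]

lemma proj_sub_proj_s13 (α β : ℝ) (z : ℂ) :
    proj α z - proj β z = z.im * (Real.cos β / Real.sin β - Real.cos α / Real.sin α) := by
  simp only [proj]
  ring

lemma cos_div_sin_injOn : InjOn (fun θ => Real.cos θ / Real.sin θ) (Ioo 0 π) := by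
  intro α hα β hβ h
  have hsα := (sin_pos_of_mem_Ioo hα).ne'
  have hsβ := (sin_pos_of_mem_Ioo hβ).ne'
  have hsin : Real.sin (α - β) = 0 := by
    field_simp at h
    rw [Real.sin_sub]
    linarith
  rw [Real.sin_eq_zero_iff_of_lt_of_lt (by linarith [hα.1, hβ.2]) (by linarith [hα.2, hβ.1])]
    at hsin
  linarith

lemma exists_proj_eq_proj_eq {α β : ℝ}
    (hαβ : Real.cos α / Real.sin α ≠ Real.cos β / Real.sin β) (r s : ℝ) :
    ∃ z : ℂ, proj α z = r ∧ proj β z = s := by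
  have hd : Real.cos β / Real.sin β - Real.cos α / Real.sin α ≠ 0 := sub_ne_zero.mpr hαβ.symm
  set y := (r - s) / (Real.cos β / Real.sin β - Real.cos α / Real.sin α)
  refine ⟨⟨r + y * (Real.cos α / Real.sin α), y⟩, ?_, ?_⟩
  · simp only [proj]
    ring
  · have hy : y * (Real.cos β / Real.sin β - Real.cos α / Real.sin α) = r - s :=
      div_mul_cancel₀ _ hd
    simp only [proj]
    linear_combination -hy

lemma proj_inter_fst {α β : ℝ} (hαβ : Real.cos α / Real.sin α ≠ Real.cos β / Real.sin β)
    (r s : ℝ) : proj α (inter α β r s) = r :=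
  (Classical.epsilon_spec (exists_proj_eq_proj_eq hαβ r s)).1

lemma proj_inter_snd {α β : ℝ} (hαβ : Real.cos α / Real.sin α ≠ Real.cos β / Real.sin β)
    (r s : ℝ) : proj β (inter α β r s) = s :=
  (Classical.epsilon_spec (exists_proj_eq_proj_eq hαβ r s)).2

lemma self_mem_lineThru (z : ℂ) (θ : ℝ) : z ∈ lineThru z θ :=
  ⟨0, by simp⟩

lemma mem_lineThru_iff_proj_eq {θ : ℝ} (hθ : Real.sin θ ≠ 0) {z w : ℂ} :
    w ∈ lineThru z θ ↔ proj θ w = proj θ z := by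
  simp only [lineThru, mem_ofPred_eq, Complex.ext_iff, Complex.add_re, Complex.add_im,
    Complex.re_ofReal_mul, Complex.im_ofReal_mul, Complex.exp_ofReal_mul_I_re,
    Complex.exp_ofReal_mul_I_im, proj]
  constructor
  · rintro ⟨t, hre, him⟩
    rw [hre, him]
    field_simp
    ring
  · intro h
    refine ⟨(w.im - z.im) / Real.sin θ, ?_, by field_simp; ring⟩
    field_simp at h ⊢
    linarith

lemma mem_lineThru_zero_iff {z w : ℂ} : w ∈ lineThru z 0 ↔ w.im = z.im := by
  constructor
  · rintro ⟨t, rfl⟩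
    simp
  · intro h
    exact ⟨w.re - z.re, Complex.ext (by simp) (by simp [h])⟩

lemma mem_lineThru_zero_iff_proj_sub_proj_eq {α β : ℝ}
    (hαβ : Real.cos α / Real.sin α ≠ Real.cos β / Real.sin β) {z w : ℂ} :
    w ∈ lineThru z 0 ↔ proj α w - proj β w = proj α z - proj β z := by
  rw [mem_lineThru_zero_iff, proj_sub_proj_s13, proj_sub_proj_s13,
    mul_left_inj' (sub_ne_zero.mpr hαβ.symm)]

lemma origamiStep_subset_succ {U : Set ℝ} {γ γ' : ℝ} (hγ : γ ∈ U) (hγ' : γ' ∈ U) (hne : γ ≠ γ')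
    (k : ℕ) : origamiStep U k ⊆ origamiStep U (k + 1) :=
  fun z hz => ⟨z, hz, z, hz, γ, hγ, γ', hγ', hne, self_mem_lineThru z γ, self_mem_lineThru z γ'⟩

lemma mem_origami_of_mem_lineThru {U : Set ℝ} {z z' w : ℂ} {γ γ' : ℝ}
    (hz : z ∈ origami U) (hz' : z' ∈ origami U) (hγ : γ ∈ U) (hγ' : γ' ∈ U) (hne : γ ≠ γ')
    (hw : w ∈ lineThru z γ) (hw' : w ∈ lineThru z' γ') : w ∈ origami U := by
  obtain ⟨k, hk⟩ := mem_iUnion.mp hz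
  obtain ⟨k', hk'⟩ := mem_iUnion.mp hz'
  have hmono : Monotone (origamiStep U) :=
    monotone_nat_of_le_succ (origamiStep_subset_succ hγ hγ' hne)
  exact mem_iUnion.mpr ⟨max k k' + 1, z, hmono (le_max_left k k') hk,
    z', hmono (le_max_right k k') hk', γ, hγ, γ', hγ', hne, hw, hw'⟩

section ThreeSlopes

variable {α β : ℝ}

lemma proj_mem_of_mem_lineThru (hα : Real.sin α ≠ 0) (hβ : Real.sin β ≠ 0)
    (hαβ : Real.cos α / Real.sin α ≠ Real.cos β / Real.sin β) {G : AddSubgroup ℝ} {z w : ℂ}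
    {δ : ℝ} (hz : proj α z ∈ G ∧ proj β z ∈ G) (hδ : δ ∈ ({0, α, β} : Set ℝ))
    (hw : w ∈ lineThru z δ) :
    (δ = 0 ∧ proj α w - proj β w ∈ G) ∨ (δ = α ∧ proj α w ∈ G) ∨ (δ = β ∧ proj β w ∈ G) := by
  rcases hδ with rfl | rfl | rfl
  · rw [mem_lineThru_zero_iff_proj_sub_proj_eq hαβ] at hw
    exact Or.inl ⟨rfl, hw ▸ sub_mem hz.1 hz.2⟩
  · exact Or.inr (Or.inl ⟨rfl, (mem_lineThru_iff_proj_eq hα).mp hw ▸ hz.1⟩)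
  · exact Or.inr (Or.inr ⟨rfl, (mem_lineThru_iff_proj_eq hβ).mp hw ▸ hz.2⟩)

lemma origamiStep_subset_proj_mem (hα : Real.sin α ≠ 0) (hβ : Real.sin β ≠ 0)
    (hαβ : Real.cos α / Real.sin α ≠ Real.cos β / Real.sin β) {G : AddSubgroup ℝ}
    (hG : (1 : ℝ) ∈ G) : ∀ k, origamiStep {0, α, β} k ⊆ {z | proj α z ∈ G ∧ proj β z ∈ G}
  | 0 => by
    rintro w (rfl | rfl) <;> simp [proj, hG, zero_mem]
  | k + 1 => by
    rintro w ⟨z, hz, z', hz', γ, hγ, γ', hγ', hne, hw, hw'⟩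
    have ih := origamiStep_subset_proj_mem hα hβ hαβ hG k
    rcases proj_mem_of_mem_lineThru hα hβ hαβ (ih hz) hγ hw with
      ⟨e, h⟩ | ⟨e, h⟩ | ⟨e, h⟩ <;>
    rcases proj_mem_of_mem_lineThru hα hβ hαβ (ih hz') hγ' hw' with
      ⟨e', h'⟩ | ⟨e', h'⟩ | ⟨e', h'⟩
    · exact absurd (e.trans e'.symm) hne
    · exact ⟨h', by simpa using sub_mem h' h⟩
    · exact ⟨by simpa using add_mem h h', h'⟩
    · exact ⟨h, by simpa using sub_mem h h'⟩
    · exact absurd (e.trans e'.symm) hne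
    · exact ⟨h, h'⟩
    · exact ⟨by simpa using add_mem h' h, h⟩
    · exact ⟨h', h⟩
    · exact absurd (e.trans e'.symm) hne

lemma mem_origami_of_proj_eq_of_proj_eq (hα : Real.sin α ≠ 0) (hβ : Real.sin β ≠ 0)
    (hαβ : Real.cos α / Real.sin α ≠ Real.cos β / Real.sin β) {z z' w : ℂ}
    (hz : z ∈ origami {0, α, β}) (hz' : z' ∈ origami {0, α, β})
    (h : proj α w = proj α z) (h' : proj β w = proj β z') : w ∈ origami {0, α, β} :=
  mem_origami_of_mem_lineThru hz hz' (by simp) (by simp) (by rintro rfl; exact hαβ rfl)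
    ((mem_lineThru_iff_proj_eq hα).mpr h) ((mem_lineThru_iff_proj_eq hβ).mpr h')

lemma mem_origami_of_proj_eq_of_proj_sub_proj_eq (hα : Real.sin α ≠ 0)
    (hαβ : Real.cos α / Real.sin α ≠ Real.cos β / Real.sin β) {z z' w : ℂ}
    (hz : z ∈ origami {0, α, β}) (hz' : z' ∈ origami {0, α, β}) (h : proj α w = proj α z)
    (h' : proj α w - proj β w = proj α z' - proj β z') : w ∈ origami {0, α, β} :=
  mem_origami_of_mem_lineThru hz hz' (by simp) (by simp) (by rintro rfl; simp at hα)
    ((mem_lineThru_iff_proj_eq hα).mpr h) ((mem_lineThru_zero_iff_proj_sub_proj_eq hαβ).mpr h')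

lemma mem_origami_of_proj_eq_of_proj_sub_proj_eq' (hβ : Real.sin β ≠ 0)
    (hαβ : Real.cos α / Real.sin α ≠ Real.cos β / Real.sin β) {z z' w : ℂ}
    (hz : z ∈ origami {0, α, β}) (hz' : z' ∈ origami {0, α, β}) (h : proj β w = proj β z)
    (h' : proj α w - proj β w = proj α z' - proj β z') : w ∈ origami {0, α, β} :=
  mem_origami_of_mem_lineThru hz hz' (by simp) (by simp) (by rintro rfl; simp at hβ)
    ((mem_lineThru_iff_proj_eq hβ).mpr h) ((mem_lineThru_zero_iff_proj_sub_proj_eq hαβ).mpr h')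

lemma inter_mem_origami_of_alpha_beta (hα : Real.sin α ≠ 0) (hβ : Real.sin β ≠ 0)
    (hαβ : Real.cos α / Real.sin α ≠ Real.cos β / Real.sin β) {a b a' b' : ℝ}
    (h : inter α β a b ∈ origami {0, α, β}) (h' : inter α β a' b' ∈ origami {0, α, β}) :
    inter α β a b' ∈ origami {0, α, β} :=
  mem_origami_of_proj_eq_of_proj_eq hα hβ hαβ h h'
    (by rw [proj_inter_fst hαβ, proj_inter_fst hαβ]) (by rw [proj_inter_snd hαβ, proj_inter_snd hαβ])

lemma inter_mem_origami_of_alpha_horizontal (hα : Real.sin α ≠ 0)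
    (hαβ : Real.cos α / Real.sin α ≠ Real.cos β / Real.sin β) {a b a' b' c : ℝ}
    (h : inter α β a b ∈ origami {0, α, β}) (h' : inter α β a' b' ∈ origami {0, α, β})
    (hc : a - c = a' - b') : inter α β a c ∈ origami {0, α, β} :=
  mem_origami_of_proj_eq_of_proj_sub_proj_eq hα hαβ h h'
    (by rw [proj_inter_fst hαβ, proj_inter_fst hαβ])
    (by simp only [proj_inter_fst hαβ, proj_inter_snd hαβ, hc])

lemma inter_mem_origami_of_beta_horizontal (hβ : Real.sin β ≠ 0)
    (hαβ : Real.cos α / Real.sin α ≠ Real.cos β / Real.sin β) {a b a' b' c : ℝ}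
    (h : inter α β a b ∈ origami {0, α, β}) (h' : inter α β a' b' ∈ origami {0, α, β})
    (hc : c - b = a' - b') : inter α β c b ∈ origami {0, α, β} :=
  mem_origami_of_proj_eq_of_proj_sub_proj_eq' hβ hαβ h h'
    (by rw [proj_inter_snd hαβ, proj_inter_snd hαβ])
    (by simp only [proj_inter_fst hαβ, proj_inter_snd hαβ, hc])

lemma inter_diag_mem_origami (hα : Real.sin α ≠ 0) (hβ : Real.sin β ≠ 0)
    (hαβ : Real.cos α / Real.sin α ≠ Real.cos β / Real.sin β) (n : ℤ) :
    inter α β n n ∈ origami {0, α, β} ∧ inter α β (n + 1) n ∈ origami {0, α, β} := by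
  have hreal {x : ℝ} (hx : (x : ℂ) ∈ origami {0, α, β}) : inter α β x x ∈ origami {0, α, β} :=
    mem_origami_of_proj_eq_of_proj_eq hα hβ hαβ hx hx
      (by rw [proj_inter_fst hαβ, proj_ofReal]) (by rw [proj_inter_snd hαβ, proj_ofReal])
  have h0 : inter α β 0 0 ∈ origami {0, α, β} :=
    hreal (mem_iUnion.mpr ⟨0, by simp [origamiStep]⟩)
  have h1 : inter α β 1 1 ∈ origami {0, α, β} :=
    hreal (mem_iUnion.mpr ⟨0, by simp [origamiStep]⟩)
  -- the companion point `⟦n + 1, n⟧` makes the induction go through in both directions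
  induction n using Int.induction_on with
  | zero =>
    simpa using ⟨h0, inter_mem_origami_of_alpha_beta hα hβ hαβ h1 h0⟩
  | succ n ih =>
    obtain ⟨hnn, hn1⟩ := ih
    push_cast at hnn hn1 ⊢
    have hsucc := inter_mem_origami_of_alpha_horizontal hα hαβ hn1 hnn (c := n + 1) (by ring)
    exact ⟨hsucc, inter_mem_origami_of_beta_horizontal hβ hαβ hsucc hn1 (by ring)⟩
  | pred n ih =>
    obtain ⟨hnn, hn1⟩ := ih
    push_cast at hnn hn1 ⊢
    have hpred := inter_mem_origami_of_alpha_horizontal hα hαβ hnn hn1 (c := -n - 1) (by ring)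
    refine ⟨inter_mem_origami_of_beta_horizontal hβ hαβ hpred hnn (by ring), ?_⟩
    simpa using hpred

theorem origami_eq_setOf_proj_mem_range_intCast (hα : Real.sin α ≠ 0) (hβ : Real.sin β ≠ 0)
    (hαβ : Real.cos α / Real.sin α ≠ Real.cos β / Real.sin β) :
    origami {0, α, β} =
      {z | proj α z ∈ (Int.castAddHom ℝ).range ∧ proj β z ∈ (Int.castAddHom ℝ).range} := by
  refine subset_antisymm (iUnion_subset (origamiStep_subset_proj_mem hα hβ hαβ ⟨1, by simp⟩)) ?_
  rintro z ⟨⟨m, hm⟩, ⟨n, hn⟩⟩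
  have hmn := inter_mem_origami_of_alpha_beta hα hβ hαβ
    (inter_diag_mem_origami hα hβ hαβ m).1 (inter_diag_mem_origami hα hβ hαβ n).1
  exact mem_origami_of_proj_eq_of_proj_eq hα hβ hαβ hmn hmn
    (by rw [proj_inter_fst hαβ, ← hm]; rfl) (by rw [proj_inter_snd hαβ, ← hn]; rfl)

end ThreeSlopes

theorem origamiR_three_slopes (α β : ℝ) (hα : α ∈ Set.Ioo 0 Real.pi)
    (hβ : β ∈ Set.Ioo 0 Real.pi) (hαβ : α ≠ β) :
    origamiR {0, α, β} = Set.range (fun n : ℤ => (n : ℝ)) := by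
  have hcot : Real.cos α / Real.sin α ≠ Real.cos β / Real.sin β :=
    fun h => hαβ (cos_div_sin_injOn hα hβ h)
  ext x
  simp [origamiR, origami_eq_setOf_proj_mem_range_intCast (sin_pos_of_mem_Ioo hα).ne'
    (sin_pos_of_mem_Ioo hβ).ne' hcot, proj_ofReal,
    AddSubgroup.mem_zmultiples_iff]
end
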